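/- Let p₁, p₂, p₃ ∈ ℝ³ be jointly active pursuers whose projections onto T are collinear, with the projection of p_i lying strictly between the projections of p_j and p_k ({i, j, k} = {1, 2, 3}), and let e ∈ ℝ³ with e₃ > 0, e ∉ {p₁, p₂, p₃}. Then (there exists t ∈ T with ‖t − e‖ < min(‖t − p₁‖, ‖t − p₂‖, ‖t − p₃‖)) if and only if (there exists t ∈ T with ‖t − e‖ < min(‖t − p_i‖, ‖t − p_j‖)) and (there exists t' ∈ T with ‖t' − e‖ < min(‖t' − p_i‖, ‖t' − p_k‖)). (Theorem 2: for three collinear-projection active pursuers, the evader winning subspace is the intersection of the evader winning subspaces of the two pairs containing the middle pursuer.) -/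

import Mathlib

noncomputable section

/-- The point of `ℝ³` with the given three coordinates. -/
def mk3 (x y z : ℝ) : EuclideanSpace ℝ (Fin 3) :=
  (WithLp.equiv 2 (Fin 3 → ℝ)).symm ![x, y, z]

/-- The projection of a point onto the target plane `T = {z | z₃ = 0}`. -/
def projT (p : EuclideanSpace ℝ (Fin 3)) : EuclideanSpace ℝ (Fin 3) :=
  mk3 (p 0) (p 1) 0

/-- The mirror of a point across the target plane `T = {z | z₃ = 0}`. -/
def mirrorT (p : EuclideanSpace ℝ (Fin 3)) : EuclideanSpace ℝ (Fin 3) :=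
  mk3 (p 0) (p 1) (-(p 2))

/-- `c` is the simultaneous-arrival point `c_{a,b}`: the (unique) point of the target
plane on the line through the projections of `a` and `b` that is equidistant from
`a` and `b`. -/
def IsCab (a b c : EuclideanSpace ℝ (Fin 3)) : Prop :=
  c 2 = 0 ∧ (∃ u : ℝ, c = projT a + u • (projT b - projT a)) ∧ ‖c - a‖ = ‖c - b‖

/-- Membership in the pursuer winning subspace `W_P^{a,b}` of the pair `{a, b}`, given the
simultaneous-arrival point `c = c_{a,b}`. -/
def memWP (a b c z : EuclideanSpace ℝ (Fin 3)) : Prop :=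
  z 2 > 0 ∧
  (∃ β : ℝ, 0 ≤ β ∧ β ≤ 1 ∧
    z 0 = β * a 0 + (1 - β) * b 0 ∧ z 1 = β * a 1 + (1 - β) * b 1) ∧
  ‖z - c‖ > ‖a - c‖

/-- Three pursuers are jointly active: for every pair `i ≠ j` their horizontal projections
differ, and neither the remaining pursuer `p_k` nor its mirror across the target plane lies
in the pursuer winning subspace `W_P^{p_i,p_j}` of the pair. -/
def JointlyActive (p : Fin 3 → EuclideanSpace ℝ (Fin 3)) : Prop :=
  ∀ i j k : Fin 3, i ≠ j → k ≠ i → k ≠ j →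
    (p i 0, p i 1) ≠ (p j 0, p j 1) ∧
    ∀ c : EuclideanSpace ℝ (Fin 3), IsCab (p i) (p j) c →
      ¬memWP (p i) (p j) c (p k) ∧ ¬memWP (p i) (p j) c (mirrorT (p k))

/-!
Write `p̄ᵢ = (1 - s) p̄ⱼ + s p̄ₖ` with `0 < s < 1`. Since `(1 - s) pⱼ + s pₖ - pᵢ` is vertical, the
quantity `(1 - s)‖x - pⱼ‖² + s‖x - pₖ‖² - ‖x - pᵢ‖²` is the same for all target points `x ∈ T`.
At `x = c_{pⱼ,pₖ}` it equals `r² - ‖c - pᵢ‖²`, which is nonnegative because neither `pᵢ` nor its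
mirror lies in `W_P^{pⱼ,pₖ}` (at `x = pᵢ` it is trivially nonnegative when `pᵢ ∈ T`). Hence
`‖x - pᵢ‖ ≤ max ‖x - pⱼ‖ ‖x - pₖ‖` on `T`: the half-plane of target points the evader reaches
before `pᵢ` is covered by those it reaches before `pⱼ` or before `pₖ`. Being connected, it meets
both of these open sets in a common point as soon as it meets each of them.
-/

open Set
open scoped InnerProductSpace

section InnerProductSpace

variable {V : Type*} [NormedAddCommGroup V] [InnerProductSpace ℝ V]

theorem convex_setOf_norm_sub_lt_norm_sub (e q : V) : Convex ℝ {x : V | ‖x - e‖ < ‖x - q‖} := by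
  have h : {x : V | ‖x - e‖ < ‖x - q‖} = {x | ⟪q - e, x⟫_ℝ < (‖q‖ ^ 2 - ‖e‖ ^ 2) / 2} := by
    ext x
    rw [mem_ofPred_eq, mem_ofPred_eq, ← sq_lt_sq₀ (norm_nonneg _) (norm_nonneg _),
      norm_sub_sq_real, norm_sub_sq_real, inner_sub_left, real_inner_comm x, real_inner_comm x]
    constructor <;> intro h <;> linarith
  rw [h]
  exact convex_halfSpace_lt (innerSL ℝ (q - e)).isLinear _

theorem weighted_sq_norm_sub_eq_of_inner_eq_zero (a b m x y : V) (s : ℝ)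
    (h : ⟪x - y, (1 - s) • a + s • b - m⟫_ℝ = 0) :
    (1 - s) * ‖x - a‖ ^ 2 + s * ‖x - b‖ ^ 2 - ‖x - m‖ ^ 2 =
      (1 - s) * ‖y - a‖ ^ 2 + s * ‖y - b‖ ^ 2 - ‖y - m‖ ^ 2 := by
  have hsplit (q : V) : ‖x - q‖ ^ 2 = ‖x - y‖ ^ 2 + 2 * ⟪x - y, y - q⟫_ℝ + ‖y - q‖ ^ 2 := by
    rw [← norm_add_sq_real, sub_add_sub_cancel]
  rw [hsplit a, hsplit b, hsplit m]
  simp only [inner_sub_right, inner_add_right, inner_smul_right] at h ⊢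
  linear_combination (-2) * h

end InnerProductSpace

theorem exists_isCab {a b : EuclideanSpace ℝ (Fin 3)} (hab : (a 0, a 1) ≠ (b 0, b 1)) :
    ∃ c, IsCab a b c := by
  set D := (b 0 - a 0) ^ 2 + (b 1 - a 1) ^ 2
  have hD : D ≠ 0 := by
    intro hD
    apply hab
    have h₀ : b 0 - a 0 = 0 := by nlinarith [sq_nonneg (b 0 - a 0), sq_nonneg (b 1 - a 1)]
    have h₁ : b 1 - a 1 = 0 := by nlinarith [sq_nonneg (b 0 - a 0), sq_nonneg (b 1 - a 1)]
    rw [sub_eq_zero.mp h₀, sub_eq_zero.mp h₁]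
  -- for `c = ā + u (b̄ - ā)` one has `‖c - a‖² - ‖c - b‖² = (2u - 1) D + a₂² - b₂²`
  set u := 1 / 2 + (b 2 ^ 2 - a 2 ^ 2) / (2 * D)
  have hu : (2 * u - 1) * D = b 2 ^ 2 - a 2 ^ 2 := by
    simp only [u]; field_simp; ring
  refine ⟨projT a + u • (projT b - projT a), by simp [projT, mk3], ⟨u, rfl⟩, ?_⟩
  rw [← sq_eq_sq₀ (norm_nonneg _) (norm_nonneg _)]
  simp only [EuclideanSpace.norm_sq_eq, Fin.sum_univ_three, Real.norm_eq_abs, sq_abs,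
    PiLp.sub_apply, PiLp.add_apply, PiLp.smul_apply, smul_eq_mul, projT, mk3,
    WithLp.equiv_symm_apply, Matrix.cons_val_zero, Matrix.cons_val_one, Matrix.cons_val]
  linear_combination hu

theorem inner_eq_zero_of_apply_two_eq_zero {v w : EuclideanSpace ℝ (Fin 3)} (hv : v 2 = 0)
    (hw₀ : w 0 = 0) (hw₁ : w 1 = 0) : ⟪v, w⟫_ℝ = 0 := by
  simp [PiLp.inner_apply, Fin.sum_univ_three, hv, hw₀, hw₁]

theorem norm_mirrorT_sub {p c : EuclideanSpace ℝ (Fin 3)} (hc : c 2 = 0) :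
    ‖mirrorT p - c‖ = ‖p - c‖ := by
  rw [← sq_eq_sq₀ (norm_nonneg _) (norm_nonneg _)]
  simp [EuclideanSpace.norm_sq_eq, Fin.sum_univ_three, mirrorT, mk3, hc]

theorem exists_coord_eq_of_sbtw_projT {a m b : EuclideanSpace ℝ (Fin 3)}
    (h : Sbtw ℝ (projT a) (projT m) (projT b)) :
    ∃ s ∈ Ioo (0 : ℝ) 1, m 0 = (1 - s) * a 0 + s * b 0 ∧ m 1 = (1 - s) * a 1 + s * b 1 := by
  obtain ⟨s, hs, hm⟩ := h.mem_image_Ioo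
  have hm₀ := congrArg (· 0) hm
  have hm₁ := congrArg (· 1) hm
  simp only [AffineMap.lineMap_apply, vsub_eq_sub, vadd_eq_add, PiLp.add_apply, PiLp.smul_apply,
    PiLp.sub_apply, smul_eq_mul, projT, mk3, WithLp.equiv_symm_apply, Matrix.cons_val_zero,
    Matrix.cons_val_one] at hm₀ hm₁
  exact ⟨s, hs, by linarith, by linarith⟩

namespace JointlyActive

variable {p : Fin 3 → EuclideanSpace ℝ (Fin 3)} {i j k : Fin 3}

theorem norm_sub_le_of_isCab (hactive : JointlyActive p) (hij : i ≠ j) (hjk : j ≠ k)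
    (hik : i ≠ k) {c : EuclideanSpace ℝ (Fin 3)} (hc : IsCab (p j) (p k) c) (hi : p i 2 ≠ 0)
    {β : ℝ} (hβ₀ : 0 ≤ β) (hβ₁ : β ≤ 1) (h₀ : p i 0 = β * p j 0 + (1 - β) * p k 0)
    (h₁ : p i 1 = β * p j 1 + (1 - β) * p k 1) :
    ‖p i - c‖ ≤ ‖p j - c‖ := by
  obtain ⟨hnot, hnot_mirror⟩ := (hactive j k i hjk hij hik).2 c hc
  rcases hi.lt_or_gt with hneg | hpos
  · rw [← norm_mirrorT_sub hc.1]
    refine not_lt.mp fun hfar => hnot_mirror ⟨?_, ⟨β, hβ₀, hβ₁, h₀, h₁⟩, hfar⟩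
    simp [mirrorT, mk3, hneg]
  · exact not_lt.mp fun hfar => hnot ⟨hpos, ⟨β, hβ₀, hβ₁, h₀, h₁⟩, hfar⟩

theorem sq_norm_sub_le (hactive : JointlyActive p) (hij : i ≠ j) (hjk : j ≠ k) (hik : i ≠ k)
    {s : ℝ} (hs₀ : 0 ≤ s) (hs₁ : s ≤ 1) (h₀ : p i 0 = (1 - s) * p j 0 + s * p k 0)
    (h₁ : p i 1 = (1 - s) * p j 1 + s * p k 1) {x : EuclideanSpace ℝ (Fin 3)} (hx : x 2 = 0) :
    ‖x - p i‖ ^ 2 ≤ (1 - s) * ‖x - p j‖ ^ 2 + s * ‖x - p k‖ ^ 2 := by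
  have hconst {y : EuclideanSpace ℝ (Fin 3)} (hy : y 2 = 0) :=
    weighted_sq_norm_sub_eq_of_inner_eq_zero (p j) (p k) (p i) x y s
      (inner_eq_zero_of_apply_two_eq_zero (by simp [hx, hy]) (by simp [h₀]) (by simp [h₁]))
  suffices ∃ y, y 2 = 0 ∧ ‖y - p i‖ ^ 2 ≤ (1 - s) * ‖y - p j‖ ^ 2 + s * ‖y - p k‖ ^ 2 by
    obtain ⟨y, hy, hle⟩ := this
    linarith [hconst hy]
  by_cases hi : p i 2 = 0
  · refine ⟨p i, hi, ?_⟩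
    rw [sub_self, norm_zero, zero_pow two_ne_zero]
    nlinarith [sq_nonneg ‖p i - p j‖, sq_nonneg ‖p i - p k‖]
  obtain ⟨c, hc⟩ := exists_isCab (hactive j k i hjk hij hik).1
  have hle := hactive.norm_sub_le_of_isCab hij hjk hik hc hi (β := 1 - s)
    (by linarith) (by linarith) (by rw [h₀]; ring) (by rw [h₁]; ring)
  rw [norm_sub_rev (p i), norm_sub_rev (p j)] at hle
  have hsq := pow_le_pow_left₀ (norm_nonneg _) hle 2
  refine ⟨c, hc.1, ?_⟩
  rw [← hc.2.2]
  linarith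

theorem norm_sub_le_max (hactive : JointlyActive p) (hij : i ≠ j) (hjk : j ≠ k) (hik : i ≠ k)
    (hbtw : Sbtw ℝ (projT (p j)) (projT (p i)) (projT (p k))) {x : EuclideanSpace ℝ (Fin 3)}
    (hx : x 2 = 0) : ‖x - p i‖ ≤ max ‖x - p j‖ ‖x - p k‖ := by
  obtain ⟨s, ⟨hs₀, hs₁⟩, h₀, h₁⟩ := exists_coord_eq_of_sbtw_projT hbtw
  have hle := hactive.sq_norm_sub_le hij hjk hik hs₀.le hs₁.le h₀ h₁ hx
  have hj := pow_le_pow_left₀ (norm_nonneg _) (le_max_left ‖x - p j‖ ‖x - p k‖) 2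
  have hk := pow_le_pow_left₀ (norm_nonneg _) (le_max_right ‖x - p j‖ ‖x - p k‖) 2
  rw [← sq_le_sq₀ (norm_nonneg _) ((norm_nonneg _).trans (le_max_left _ _))]
  nlinarith

end JointlyActive

theorem collinear_three_pursuer_evader_winning_general (p : Fin 3 → EuclideanSpace ℝ (Fin 3))
    (hactive : JointlyActive p)
    (i j k : Fin 3) (hij : i ≠ j) (hjk : j ≠ k) (hik : i ≠ k)
    (hbtw : Sbtw ℝ (projT (p j)) (projT (p i)) (projT (p k)))
    (e : EuclideanSpace ℝ (Fin 3)) :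
    (∃ t : EuclideanSpace ℝ (Fin 3), t 2 = 0 ∧
        ‖t - e‖ < min ‖t - p i‖ (min ‖t - p j‖ ‖t - p k‖)) ↔
    ((∃ t : EuclideanSpace ℝ (Fin 3), t 2 = 0 ∧ ‖t - e‖ < min ‖t - p i‖ ‖t - p j‖) ∧
      (∃ t' : EuclideanSpace ℝ (Fin 3), t' 2 = 0 ∧ ‖t' - e‖ < min ‖t' - p i‖ ‖t' - p k‖)) := by
  simp only [lt_min_iff]
  refine ⟨fun ⟨t, ht, hti, htj, htk⟩ => ⟨⟨t, ht, hti, htj⟩, ⟨t, ht, hti, htk⟩⟩, ?_⟩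
  rintro ⟨⟨t, ht, hti, htj⟩, ⟨t', ht', hti', htk'⟩⟩
  have hplane : Convex ℝ {x : EuclideanSpace ℝ (Fin 3) | x 2 = 0} :=
    convex_hyperplane (EuclideanSpace.proj 2 : EuclideanSpace ℝ (Fin 3) →L[ℝ] ℝ).isLinear 0
  have hconn := (hplane.inter (convex_setOf_norm_sub_lt_norm_sub e (p i))).isPreconnected
  have hcover : {x | x 2 = 0} ∩ {x | ‖x - e‖ < ‖x - p i‖} ⊆
      {x | ‖x - e‖ < ‖x - p j‖} ∪ {x | ‖x - e‖ < ‖x - p k‖} := fun x ⟨hx, hxi⟩ =>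
    lt_max_iff.mp (hxi.trans_le (hactive.norm_sub_le_max hij hjk hik hbtw hx))
  obtain ⟨x, ⟨hx, hxi⟩, hxj, hxk⟩ := hconn _ _ (isOpen_lt (by fun_prop) (by fun_prop))
    (isOpen_lt (by fun_prop) (by fun_prop)) hcover ⟨t, ⟨ht, hti⟩, htj⟩ ⟨t', ⟨ht', hti'⟩, htk'⟩
  exact ⟨x, hx, hxi, hxj, hxk⟩

/-- Theorem 2 (evader winning subspace): for three jointly active pursuers with collinear
projections, the middle pursuer being `p_i`, the evader winning subspace is the intersection
of the evader winning subspaces of the two pairs containing the middle pursuer. -/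
theorem collinear_three_pursuer_evader_winning (p : Fin 3 → EuclideanSpace ℝ (Fin 3))
    (hactive : JointlyActive p)
    (i j k : Fin 3) (hij : i ≠ j) (hjk : j ≠ k) (hik : i ≠ k)
    (hcol : Collinear ℝ ({projT (p i), projT (p j), projT (p k)} :
      Set (EuclideanSpace ℝ (Fin 3))))
    (hbtw : Sbtw ℝ (projT (p j)) (projT (p i)) (projT (p k)))
    (e : EuclideanSpace ℝ (Fin 3)) (he : e 2 > 0) (hne : ∀ m, e ≠ p m) :
    (∃ t : EuclideanSpace ℝ (Fin 3), t 2 = 0 ∧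
        ‖t - e‖ < min ‖t - p i‖ (min ‖t - p j‖ ‖t - p k‖)) ↔
    ((∃ t : EuclideanSpace ℝ (Fin 3), t 2 = 0 ∧ ‖t - e‖ < min ‖t - p i‖ ‖t - p j‖) ∧
      (∃ t' : EuclideanSpace ℝ (Fin 3), t' 2 = 0 ∧ ‖t' - e‖ < min ‖t' - p i‖ ‖t' - p k‖)) :=
  collinear_three_pursuer_evader_winning_general p hactive i j k hij hjk hik hbtw e
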